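/- arXiv:1511.01779 — 3 statements merged into one kernel-verified Lean document; each statement's English description precedes it below -/
import Mathlib

section
/- In any execution of the mutual-exclusion algorithm built from single-writer lock registers r_{ij}, at most one process holds the lock on any given object: if process p_i writes 1 to r_{ij}, then reads r_{kj} = 0 for all k ≠ i, and process p_k writes 1 to r_{kj}, then reads r_{tj} = 0 for all t ≠ k, on the same object j, with all reads returning the latest preceding write, then a contradiction arises — hence two processes cannot both successfully acquire the lock on object j. -/
/-- An event on the single-object lock registers: `write p v` is process `p`
writing `v` to its own register `r_p`, and `read p q v` is process `p` reading
register `r_q` of process `q` and obtaining value `v`. -/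
inductive Ev (P : Type*) where
  | write (p : P) (v : Bool)
  | read (p : P) (q : P) (v : Bool)

/-- The value of register `r_q` after executing a list of events
(initially `false`, and the latest write wins). -/
def regVal {P : Type*} [DecidableEq P] (l : List (Ev P)) (q : P) : Bool :=
  l.foldl (fun acc e =>
    match e with
    | Ev.write p v => if p = q then v else acc
    | Ev.read _ _ _ => acc) false

/-- Process `p` acquires the lock in execution `E`: it writes `1` to its own
register, never subsequently writes `0` to it (no release), and afterwards
reads every other process's register as `0`. -/
def acquires {P : Type*} (E : List (Ev P)) (p : P) : Prop :=
  ∃ w, E[(w : ℕ)]? = some (Ev.write p true) ∧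
    (∀ u v, w < u → E[u]? = some (Ev.write p v) → v = true) ∧
    (∀ q, q ≠ p → ∃ t, w < t ∧ E[t]? = some (Ev.read p q false))

/-! After a process writes `1` and never releases, its register holds `1` in every later
prefix, so any read of it returning `0` must precede that write. Applied to both processes
this gives the impossible cycle `wₚ < tₚ ≤ wₖ < tₖ ≤ wₚ` of write and read positions. -/

section Registers

variable {P : Type*} [DecidableEq P]

@[simp]
lemma regVal_append_write (l : List (Ev P)) (p q : P) (v : Bool) :
    regVal (l ++ [Ev.write p v]) q = if p = q then v else regVal l q := by
  simp [regVal]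

@[simp]
lemma regVal_append_read (l : List (Ev P)) (p r q : P) (v : Bool) :
    regVal (l ++ [Ev.read p r v]) q = regVal l q := by
  simp [regVal]

lemma regVal_take_eq_true {E : List (Ev P)} {q : P} {w : ℕ}
    (hw : E[w]? = some (Ev.write q true))
    (hkeep : ∀ u v, w < u → E[u]? = some (Ev.write q v) → v = true) :
    ∀ t, w < t → regVal (E.take t) q = true := by
  intro t hwt
  induction t, hwt using Nat.le_induction with
  | base => simp [List.take_add_one, hw]
  | succ n hwn ih =>
    rw [List.take_add_one]
    rcases hn : E[n]? with _ | ⟨a, v⟩ | ⟨a, r, v⟩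
    · simpa using ih
    · by_cases haq : a = q
      · subst haq
        simpa using hkeep n v hwn hn
      · simpa [haq] using ih
    · simpa using ih

lemma read_false_le_write {E : List (Ev P)}
    (hread : ∀ t p q v, E[t]? = some (Ev.read p q v) → v = regVal (E.take t) q)
    {p q : P} {w t : ℕ} (hw : E[w]? = some (Ev.write q true))
    (hkeep : ∀ u v, w < u → E[u]? = some (Ev.write q v) → v = true)
    (ht : E[t]? = some (Ev.read p q false)) : t ≤ w := by
  by_contra! hwt
  simpa [regVal_take_eq_true hw hkeep t hwt] using hread t p q false ht

end Registers

/-- Mutual exclusion of the single-writer register lock: in an execution where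
every read returns the value of the latest preceding write, two distinct
processes cannot both acquire the lock on the same object. -/
theorem stmt6 {P : Type*} [DecidableEq P] (E : List (Ev P))
    (hread : ∀ t p q v, E[t]? = some (Ev.read p q v) → v = regVal (E.take t) q)
    (p k : P) (hpk : p ≠ k)
    (hp : acquires E p) (hk : acquires E k) :
    False := by
  obtain ⟨wp, hwp, hkeep_p, hreads_p⟩ := hp
  obtain ⟨wk, hwk, hkeep_k, hreads_k⟩ := hk
  obtain ⟨tp, hwp_tp, htp⟩ := hreads_p k hpk.symm
  obtain ⟨tk, hwk_tk, htk⟩ := hreads_k p hpk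
  have htp_wk : tp ≤ wk := read_false_le_write hread hwk hkeep_k htp
  have htk_wp : tk ≤ wp := read_false_le_write hread hwp hkeep_p htk
  omega
end

section
/- A distinguishing argument forces linearly many distinct accesses: suppose there are m−1 'adversary executions' producing m−1 pairwise distinct memory configurations C₁, ..., C_{m−1}, all differing from a baseline configuration C₀ only in the states of pairwise-disjoint nonempty sets B₁, ..., B_{m−1} of base objects, and a deterministic operation must produce a different output depending on which of C₀, C₁, ..., C_{m−1} it runs in. Then the operation must read at least m−1 distinct base objects, at least one from each Bⱼ. -/
open Function

theorem exists_mem_reads_ne_of_out_ne {B V O : Type*} (reads : (B → V) → List B)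
    (out : (B → V) → O)
    (hdet : ∀ M M' : B → V, (∀ b ∈ reads M, M b = M' b) → out M' = out M)
    {M M' : B → V} (hout : out M' ≠ out M) : ∃ b ∈ reads M, M b ≠ M' b := by
  by_contra! hsame
  exact hout (hdet M M' hsame)

theorem Fintype.card_le_card_of_pairwise_disjoint_of_forall_exists_mem {ι α : Type*}
    [Fintype ι] {S : ι → Set α} (hS : Pairwise (Disjoint on S)) {s : Finset α}
    (hmeet : ∀ i, ∃ a ∈ S i, a ∈ s) : Fintype.card ι ≤ s.card := by
  choose f hfS hfs using hmeet
  have hf : Injective f := fun i j hij => by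
    by_contra hne
    exact Set.disjoint_left.mp (hS hne) (hfS i) (hij ▸ hfS j)
  rw [← Finset.card_univ]
  exact Finset.card_le_card_of_injOn f (fun i _ => hfs i) hf.injOn

theorem stmt12_general {B V O : Type*} [DecidableEq B] (k : ℕ)
    (Bs : Fin k → Set B)
    (hdisj : ∀ j j' : Fin k, j ≠ j' → Bs j ∩ Bs j' = ∅)
    (C0 : B → V) (C : Fin k → B → V)
    (hagree : ∀ j b, b ∉ Bs j → C j b = C0 b)
    (reads : (B → V) → List B) (out : (B → V) → O)
    (hdet : ∀ M M' : B → V, (∀ b ∈ reads M, M b = M' b) →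
      reads M' = reads M ∧ out M' = out M)
    (hout : ∀ j, out (C j) ≠ out C0) :
    (∀ j, ∃ b ∈ Bs j, b ∈ reads C0) ∧ k ≤ (reads C0).toFinset.card := by
  have hread : ∀ j, ∃ b ∈ Bs j, b ∈ reads C0 := fun j => by
    obtain ⟨b, hb, hchanged⟩ :=
      exists_mem_reads_ne_of_out_ne reads out (fun M M' h => (hdet M M' h).2) (hout j)
    exact ⟨b, by_contra fun hbj => hchanged (hagree j b hbj).symm, hb⟩
  refine ⟨hread, ?_⟩
  have hdisj' : Pairwise (Disjoint on Bs) := fun j j' h =>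
    Set.disjoint_iff_inter_eq_empty.mpr (hdisj j j' h)
  simpa using Fintype.card_le_card_of_pairwise_disjoint_of_forall_exists_mem hdisj'
    (s := (reads C0).toFinset) (by simpa using hread)

/-- A distinguishing argument forces linearly many distinct accesses: given
`k` adversary configurations `C j`, each agreeing with the baseline `C0`
outside a set `Bs j` of base objects, with the `Bs j` pairwise disjoint and
nonempty, a deterministic (adaptive) read-only operation that must output
differently in each `C j` than in `C0` must read, in its run from `C0`, a base
object from each `Bs j`, hence at least `k` distinct base objects. -/
theorem stmt12 {B V O : Type*} [DecidableEq B] (k : ℕ)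
    (Bs : Fin k → Set B)
    (hdisj : ∀ j j' : Fin k, j ≠ j' → Bs j ∩ Bs j' = ∅)
    (hne : ∀ j, (Bs j).Nonempty)
    (C0 : B → V) (C : Fin k → B → V)
    (hagree : ∀ j b, b ∉ Bs j → C j b = C0 b)
    (reads : (B → V) → List B) (out : (B → V) → O)
    (hdet : ∀ M M' : B → V, (∀ b ∈ reads M, M b = M' b) →
      reads M' = reads M ∧ out M' = out M)
    (hout : ∀ j, out (C j) ≠ out C0) :
    (∀ j, ∃ b ∈ Bs j, b ∈ reads C0) ∧ k ≤ (reads C0).toFinset.card :=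
  stmt12_general k Bs hdisj C0 C hagree reads out hdet hout
end

section
/- The RAW/AWAR-freedom commuting argument: let π = π_s · π_w · π_f be a sequence of memory events by transaction T₁ where π_s contains no writes to base objects, π_w is a single write that is not an atomic-write-after-read (AWAR), and π_w · π_f contains no read-after-write (RAW) pattern, i.e., every read in π_f is to a base object previously written in π_w · π_f by T₁. Then for any event sequence ρ by another process touching arbitrary base objects, the executions π_s · π_w · π_f and π_s · ρ · π_w · π_f are indistinguishable to T₁ (every read by T₁ returns the same value in both), and π_s · ρ is indistinguishable to the process executing ρ from ρ alone. -/
/-- A memory event: a read of base object `b` by process `p`, or a write of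
value `v` to base object `b` by process `p`. -/
inductive MEv (P B V : Type*) where
  | read (p : P) (b : B)
  | write (p : P) (b : B) (v : V)

/-- The process performing an event. -/
def MEv.proc {P B V : Type*} : MEv P B V → P
  | .read p _ => p
  | .write p _ _ => p

/-- Whether an event is a write. -/
def MEv.isWrite {P B V : Type*} : MEv P B V → Prop
  | .read _ _ => False
  | .write _ _ _ => True

/-- The sequence of values returned by the reads of process `p` when the event
list is executed from memory `M` (a read returns the value of the latest
preceding write to that object, or the initial value). -/
def view {P B V : Type*} [DecidableEq P] [DecidableEq B] (p : P) :
    (B → V) → List (MEv P B V) → List V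
  | _, [] => []
  | M, MEv.read q b :: rest => (if q = p then [M b] else []) ++ view p M rest
  | M, MEv.write _ b v :: rest => view p (Function.update M b v) rest

/-!
A write-free prefix leaves memory unchanged and, being `T₁`'s, returns nothing to the other
process. The events of `ρ` return nothing to `T₁` either; their only effect is on memory. That
effect is invisible to `T₁` afterwards: its next event overwrites `bw`, and every later read of
`T₁` is of `bw` or of an object it has itself written since, so it never returns a value that
`ρ` could have changed.
-/

namespace MEv

variable {P B V : Type*} [DecidableEq B]

def applyWrites : (B → V) → List (MEv P B V) → (B → V)
  | M, [] => M
  | M, read _ _ :: l => applyWrites M l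
  | M, write _ b v :: l => applyWrites (Function.update M b v) l

theorem applyWrites_of_forall_not_isWrite (M : B → V) {l : List (MEv P B V)}
    (hl : ∀ e ∈ l, ¬ e.isWrite) : applyWrites M l = M := by
  induction l with
  | nil => rfl
  | cons e l ih =>
    cases e with
    | read q b => exact ih fun e he => hl e (List.mem_cons_of_mem _ he)
    | write q b v => exact absurd trivial (hl _ List.mem_cons_self)

end MEv

section

open MEv

variable {P B V : Type*} [DecidableEq P] [DecidableEq B]

theorem view_append (p : P) (M : B → V) (l₁ l₂ : List (MEv P B V)) :
    view p M (l₁ ++ l₂) = view p M l₁ ++ view p (applyWrites M l₁) l₂ := by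
  induction l₁ generalizing M with
  | nil => rfl
  | cons e l ih =>
    cases e with
    | read q b => simp only [List.cons_append, view, applyWrites, ih, List.append_assoc]
    | write q b v => simp only [List.cons_append, view, applyWrites, ih]

theorem view_eq_nil_of_forall_proc_ne {p : P} (M : B → V) {l : List (MEv P B V)}
    (hl : ∀ e ∈ l, e.proc ≠ p) : view p M l = [] := by
  induction l generalizing M with
  | nil => rfl
  | cons e l ih =>
    have hl' : ∀ e ∈ l, e.proc ≠ p := fun e he => hl e (List.mem_cons_of_mem _ he)
    cases e with
    | read q b =>
      have hq : q ≠ p := hl _ List.mem_cons_self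
      simp only [view, if_neg hq, List.nil_append, ih M hl']
    | write q b v => exact ih _ hl'

/-- Two memories give `p` the same view of `l` as long as they agree on every object that `l`
reads before writing it. -/
theorem view_congr_of_agree_before_write (p : P) {l : List (MEv P B V)} {M₁ M₂ : B → V}
    (h : ∀ (t : ℕ) (q : P) (b : B), l[t]? = some (read q b) →
      M₁ b = M₂ b ∨ ∃ u < t, ∃ q' v, l[u]? = some (write q' b v)) :
    view p M₁ l = view p M₂ l := by
  induction l generalizing M₁ M₂ with
  | nil => rfl
  | cons e l ih =>
    have h_tail : ∀ (t : ℕ) (q : P) (b : B), l[t]? = some (read q b) →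
        M₁ b = M₂ b ∨ (∃ q' v, e = write q' b v) ∨
          ∃ u < t, ∃ q' v, l[u]? = some (write q' b v) := by
      intro t q b ht
      rcases h (t + 1) q b ht with hb | ⟨_ | u, hu, q', v, hw⟩
      · exact Or.inl hb
      · exact Or.inr (Or.inl ⟨q', v, by simpa using hw⟩)
      · exact Or.inr (Or.inr ⟨u, by omega, q', v, hw⟩)
    cases e with
    | read q b =>
      have hb : M₁ b = M₂ b := (h 0 q b rfl).resolve_right (by simp)
      have hrest : view p M₁ l = view p M₂ l := ih fun t q' b' ht => by
        rcases h_tail t q' b' ht with hb' | ⟨_, _, hw⟩ | hw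
        · exact Or.inl hb'
        · cases hw
        · exact Or.inr hw
      simp only [view, hb, hrest]
    | write q b v =>
      refine ih fun t q' b' ht => ?_
      by_cases hbb : b' = b
      · subst hbb
        exact Or.inl (by simp)
      · rcases h_tail t q' b' ht with hb' | ⟨_, _, hw⟩ | hw
        · exact Or.inl (by simp [Function.update_of_ne hbb, hb'])
        · cases hw; exact absurd rfl hbb
        · exact Or.inr hw

theorem view_write_cons_eq_of_reads_written (p q : P) (M₁ M₂ : B → V) {l : List (MEv P B V)}
    (bw : B) (vw : V)
    (hl : ∀ (t : ℕ) (r : P) (b : B), l[t]? = some (read r b) →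
      b = bw ∨ ∃ u v, u < t ∧ l[u]? = some (write q b v)) :
    view p M₁ (write q bw vw :: l) = view p M₂ (write q bw vw :: l) := by
  refine view_congr_of_agree_before_write p fun t r b ht => Or.inr ?_
  cases t with
  | zero => simp at ht
  | succ t =>
    rcases hl t r b ht with rfl | ⟨u, v, hu, hw⟩
    · exact ⟨0, t.succ_pos, q, vw, rfl⟩
    · exact ⟨u + 1, by omega, q, v, hw⟩

end

theorem stmt13_general {P B V : Type*} [DecidableEq P] [DecidableEq B]
    (T1 p2 : P) (hne : p2 ≠ T1) (M0 : B → V)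
    (πs πf ρ : List (MEv P B V)) (bw : B) (vw : V)
    (hs_proc : ∀ e ∈ πs, MEv.proc e = T1)
    (hρ_proc : ∀ e ∈ ρ, MEv.proc e = p2)
    (hs_nowrite : ∀ e ∈ πs, ¬ MEv.isWrite e)
    (hRAWfree : ∀ (t : ℕ) (q : P) (b : B), πf[t]? = some (MEv.read q b) →
      b = bw ∨ ∃ u v, u < t ∧ πf[u]? = some (MEv.write T1 b v)) :
    view T1 M0 (πs ++ MEv.write T1 bw vw :: πf) =
        view T1 M0 (πs ++ ρ ++ MEv.write T1 bw vw :: πf) ∧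
      view p2 M0 (πs ++ ρ) = view p2 M0 ρ := by
  have hs_mem : MEv.applyWrites M0 πs = M0 :=
    MEv.applyWrites_of_forall_not_isWrite M0 hs_nowrite
  have hρ_silent : view T1 M0 ρ = [] :=
    view_eq_nil_of_forall_proc_ne M0 fun e he => hρ_proc e he ▸ hne
  have hs_silent : view p2 M0 πs = [] :=
    view_eq_nil_of_forall_proc_ne M0 fun e he => hs_proc e he ▸ hne.symm
  refine ⟨?_, by rw [view_append, hs_silent, hs_mem, List.nil_append]⟩
  rw [List.append_assoc, view_append, view_append _ _ πs, hs_mem, view_append, hρ_silent,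
    List.nil_append,
    view_write_cons_eq_of_reads_written T1 T1 M0 (MEv.applyWrites M0 ρ) bw vw hRAWfree]

/-- The RAW/AWAR-freedom commuting argument: if `π_s` (by `T₁`) contains no
writes, `π_w` is a single plain (non-AWAR) write by `T₁`, and every read in
`π_f` (by `T₁`) is to a base object previously written by `T₁` within
`π_w · π_f` (no RAW), then inserting an event sequence `ρ` of another process
between `π_s` and `π_w` is indistinguishable to `T₁`, and prepending `π_s`
before `ρ` is indistinguishable to the process executing `ρ`. -/
theorem stmt13 {P B V : Type*} [DecidableEq P] [DecidableEq B]
    (T1 p2 : P) (hne : p2 ≠ T1) (M0 : B → V)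
    (πs πf ρ : List (MEv P B V)) (bw : B) (vw : V)
    (hs_proc : ∀ e ∈ πs, MEv.proc e = T1)
    (hf_proc : ∀ e ∈ πf, MEv.proc e = T1)
    (hρ_proc : ∀ e ∈ ρ, MEv.proc e = p2)
    (hs_nowrite : ∀ e ∈ πs, ¬ MEv.isWrite e)
    (hRAWfree : ∀ (t : ℕ) (q : P) (b : B), πf[t]? = some (MEv.read q b) →
      b = bw ∨ ∃ u v, u < t ∧ πf[u]? = some (MEv.write T1 b v)) :
    view T1 M0 (πs ++ MEv.write T1 bw vw :: πf) =
        view T1 M0 (πs ++ ρ ++ MEv.write T1 bw vw :: πf) ∧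
      view p2 M0 (πs ++ ρ) = view p2 M0 ρ :=
  stmt13_general T1 p2 hne M0 πs πf ρ bw vw hs_proc hρ_proc hs_nowrite hRAWfree
end
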